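/- Let (b_1,…,b_d) be an HKZ-reduced basis of a lattice L of dimension d ≥ 2. For all integers 0 ≤ k ≤ d-1, π_{[k+1,d]} ≥ (Γ_d(k))^{-1} · (det L)^{1/d} ≥ (√d)^{log((d-k)/d)} · (det L)^{1/d}, where π_I = (∏_{i∈I} ‖b_i^*‖)^{1/|I|} and det L = ∏_{i=1}^d ‖b_i^*‖. -/

import Mathlib

open Finset Real

/-!
In logarithms, the HKZ inequality for `b_{d-n}` says that dropping the first of the last `n + 1`
entries lowers the mean of `log ‖b_i^*‖` over the tail by at most `log γ_{n+1} / (2n)`; summing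
these losses from `n = d - k` to `d - 1` gives the first inequality. For the second,
`γ_{n+1} ≤ (n + 5) / 4` yields `log γ_{n+1} / (2n) ≤ ½ log d · (log (n + 1) - log n)`, and these
bounds telescope to `½ log d · log (d / (d - k))`.
-/

lemma inv_add_one_le_log_add_one_sub_log {x : ℝ} (hx : 0 < x) :
    (x + 1)⁻¹ ≤ log (x + 1) - log x := by
  have h := one_sub_inv_le_log_of_pos (show 0 < (x + 1) / x by positivity)
  rw [log_div (by positivity) hx.ne', inv_div] at h
  calc (x + 1)⁻¹ = 1 - x / (x + 1) := by field_simp; ring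
    _ ≤ _ := h

lemma add_one_le_twelve_sevenths_pow {n : ℕ} (hn : 2 ≤ n) :
    (n + 1 : ℝ) ≤ (12 / 7) ^ (n + 1) := by
  induction n, hn using Nat.le_induction with
  | base => norm_num
  | succ n hn ih =>
    have : (2 : ℝ) ≤ n := by exact_mod_cast hn
    push_cast
    rw [pow_succ]
    nlinarith

lemma add_five_div_four_pow_le {n : ℕ} (hn : 2 ≤ n) :
    ((n + 5) / 4 : ℝ) ^ (n + 1) ≤ (n + 1) ^ n := by
  have hratio : (12 / 7 : ℝ) ≤ 4 * (n + 1) / (n + 5) := by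
    have : (2 : ℝ) ≤ n := by exact_mod_cast hn
    rw [le_div_iff₀ (by positivity)]; linarith
  have h := (add_one_le_twelve_sevenths_pow hn).trans (pow_le_pow_left₀ (by norm_num) hratio _)
  rw [div_pow, le_div_iff₀ (by positivity), mul_pow, pow_succ (_ + 1 : ℝ) n] at h
  rw [div_pow, div_le_iff₀ (by positivity)]
  nlinarith [show (0 : ℝ) < n + 1 by positivity]

lemma log_three_halves_le_sq_log_two : log (3 / 2) ≤ log 2 ^ 2 := by
  have h98 := log_le_sub_one_of_pos (show (0 : ℝ) < 9 / 8 by norm_num)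
  have hsplit : 2 * log (3 / 2) = log 2 + log (9 / 8) := by
    rw [← log_mul (by norm_num) (by norm_num), show (2 : ℝ) * (9 / 8) = (3 / 2) ^ 2 by norm_num,
      log_pow]
    norm_num
  nlinarith [log_two_gt_d9]

lemma log_le_mul_log_add_one_mul_sub_log {n : ℕ} (hn : 1 ≤ n) {g : ℝ} (hg : 0 < g)
    (hgn : g ≤ (n + 5) / 4) :
    log g ≤ n * log (n + 1) * (log (n + 1) - log n) := by
  obtain rfl | hn2 := hn.eq_or_lt
  · calc log g ≤ log (3 / 2) := log_le_log hg (by norm_num at hgn ⊢; linarith)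
      _ ≤ log 2 ^ 2 := log_three_halves_le_sq_log_two
      _ = _ := by norm_num; ring
  have hpow := log_le_log (by positivity) (add_five_div_four_pow_le hn2)
  rw [log_pow, log_pow] at hpow
  push_cast at hpow
  calc log g ≤ log ((n + 5) / 4) := log_le_log hg hgn
    _ ≤ n * log (n + 1) * (n + 1 : ℝ)⁻¹ := by
      rw [le_mul_inv_iff₀ (by positivity)]; linarith
    _ ≤ n * log (n + 1) * (log (n + 1) - log n) :=
      mul_le_mul_of_nonneg_left (inv_add_one_le_log_add_one_sub_log (by positivity))
        (mul_nonneg n.cast_nonneg (log_nonneg (by simp)))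

lemma sum_log_div_le_mul_log_sub_log {γ : ℕ → ℝ} (hγ : ∀ n, 0 < γ n)
    (hγ' : ∀ n, 2 ≤ n → γ n ≤ ((n : ℝ) + 4) / 4) {d m : ℕ} (hm : 1 ≤ m) (hmd : m ≤ d) :
    ∑ n ∈ Ico m d, log (γ (n + 1)) / 2 / n ≤ log d / 2 * (log d - log m) := by
  calc ∑ n ∈ Ico m d, log (γ (n + 1)) / 2 / n
      ≤ ∑ n ∈ Ico m d, log d / 2 * (log ((n + 1 : ℕ) : ℝ) - log n) := by
        refine sum_le_sum fun n hn => ?_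
        obtain ⟨hmn, hnd⟩ := mem_Ico.mp hn
        have hn0 : (0 : ℝ) < n := by exact_mod_cast hm.trans hmn
        have hγn : γ (n + 1) ≤ (n + 5) / 4 := by
          have := hγ' (n + 1) (by omega); push_cast at this; linarith
        have hlog := log_le_mul_log_add_one_mul_sub_log (hm.trans hmn) (hγ _) hγn
        have hlogd : log (n + 1) ≤ log d := log_le_log (by positivity) (by exact_mod_cast hnd)
        have hgap : 0 ≤ log (n + 1) - log n :=
          (inv_add_one_le_log_add_one_sub_log hn0).trans' (by positivity)
        rw [div_div, div_le_iff₀ (by positivity)]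
        push_cast
        nlinarith [mul_le_mul_of_nonneg_right hlogd (mul_nonneg hn0.le hgap)]
    _ = log d / 2 * (log d - log m) := by
      rw [← mul_sum, sum_Ico_sub (f := fun n : ℕ => log (n : ℝ)) hmd]

/-- The mean of `x` over the last `n` indices of `[1, d]`; for `x = log ∘ B` this is
`log π_{[d-n+1,d]}`. -/
noncomputable def tailMean (x : ℕ → ℝ) (d n : ℕ) : ℝ := (∑ i ∈ Icc (d + 1 - n) d, x i) / n

lemma tailMean_succ_sub_div_le (x : ℕ → ℝ) {d n : ℕ} (hn : 0 < n) (hnd : n ≤ d) {c : ℝ}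
    (h : x (d - n) ≤ c + tailMean x d (n + 1)) :
    tailMean x d (n + 1) - c / n ≤ tailMean x d n := by
  have hsplit : ∑ i ∈ Icc (d - n) d, x i = x (d - n) + ∑ i ∈ Icc (d + 1 - n) d, x i := by
    rw [← add_sum_Ioc_eq_sum_Icc (by omega), ← Icc_add_one_left_eq_Ioc, Nat.sub_add_comm hnd]
  unfold tailMean at h ⊢
  rw [Nat.add_sub_add_right, hsplit] at h ⊢
  set S := ∑ i ∈ Icc (d + 1 - n) d, x i
  set A := (x (d - n) + S) / ((n + 1 : ℕ) : ℝ)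
  have hA : x (d - n) + S = ((n + 1 : ℕ) : ℝ) * A := (mul_div_cancel₀ _ (by positivity)).symm
  push_cast at hA
  rw [sub_le_iff_le_add, ← add_div, le_div_iff₀ (by exact_mod_cast hn)]
  linarith

lemma tailMean_sub_sum_le (x c : ℕ → ℝ) {d m : ℕ} (hm : 0 < m) (hmd : m ≤ d)
    (h : ∀ n ∈ Ico m d, x (d - n) ≤ c n + tailMean x d (n + 1)) :
    tailMean x d d - ∑ n ∈ Ico m d, c n / n ≤ tailMean x d m := by
  have hstep : ∑ n ∈ Ico m d, (tailMean x d (n + 1) - tailMean x d n) ≤ ∑ n ∈ Ico m d, c n / n :=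
    sum_le_sum fun n hn => by
      obtain ⟨hmn, hnd⟩ := mem_Ico.mp hn
      linarith [tailMean_succ_sub_div_le x (hm.trans_le hmn) hnd.le (h n hn)]
  rw [sum_Ico_sub (f := tailMean x d) hmd] at hstep
  linarith

lemma prod_rpow_eq_exp_tailMean {B : ℕ → ℝ} {d n : ℕ} (hB : ∀ i ∈ Icc (d + 1 - n) d, 0 < B i) :
    (∏ i ∈ Icc (d + 1 - n) d, B i) ^ ((1 : ℝ) / n) = exp (tailMean (fun i => log (B i)) d n) := by
  rw [rpow_def_of_pos (prod_pos hB), log_prod fun i hi => (hB i hi).ne', mul_one_div, tailMean]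

lemma log_le_half_log_add_tailMean {B : ℕ → ℝ} {d i : ℕ} (hid : i ≤ d)
    (hB : ∀ j ∈ Icc i d, 0 < B j) {g : ℝ} (hg : 0 < g)
    (h : B i ≤ √g * (∏ j ∈ Icc i d, B j) ^ ((1 : ℝ) / ((d : ℝ) - i + 1))) :
    log (B i) ≤ log g / 2 + tailMean (fun j => log (B j)) d (d - i + 1) := by
  have hIcc : d + 1 - (d - i + 1) = i := by omega
  have hmean := prod_rpow_eq_exp_tailMean (B := B) (d := d) (n := d - i + 1) (by rwa [hIcc])
  rw [hIcc, Nat.cast_add, Nat.cast_sub hid, Nat.cast_one] at hmean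
  rw [hmean] at h
  have := log_le_log (hB i (by simp [hid])) h
  rwa [log_mul (by positivity) (exp_pos _).ne', log_sqrt hg.le, log_exp] at this

/-- Second inequality of the averaged Schnorr lemma. `B i = ‖bᵢ*‖` for an
HKZ-reduced basis, `det L = ∏ i ∈ [1,d], B i`, and `γ` are Hermite's constants,
of which we only use `1 ≤ γ n ≤ (n+4)/4` and the Minkowski-type inequality. -/
theorem pi_tail_ge (d : ℕ) (hd : 2 ≤ d) (B : ℕ → ℝ)
    (hBpos : ∀ i, 1 ≤ i → i ≤ d → 0 < B i)
    (γ : ℕ → ℝ) (hγ : ∀ n, 1 ≤ γ n) (hγ' : ∀ n, 2 ≤ n → γ n ≤ ((n : ℝ) + 4) / 4)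
    (hHKZ : ∀ i, 1 ≤ i → i ≤ d →
      B i ≤ Real.sqrt (γ (d - i + 1)) *
        (∏ j ∈ Finset.Icc i d, B j) ^ ((1 : ℝ) / ((d : ℝ) - (i : ℝ) + 1)))
    (k : ℕ) (hk : k ≤ d - 1) :
    (∏ i ∈ Finset.Icc (k + 1) d, B i) ^ ((1 : ℝ) / ((d : ℝ) - (k : ℝ))) ≥
        (∏ i ∈ Finset.Icc (d - k) (d - 1), γ (i + 1) ^ ((1 : ℝ) / (2 * i)))⁻¹ *
          (∏ i ∈ Finset.Icc 1 d, B i) ^ ((1 : ℝ) / (d : ℝ)) ∧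
      (∏ i ∈ Finset.Icc (d - k) (d - 1), γ (i + 1) ^ ((1 : ℝ) / (2 * i)))⁻¹ *
          (∏ i ∈ Finset.Icc 1 d, B i) ^ ((1 : ℝ) / (d : ℝ)) ≥
        Real.sqrt d ^ Real.log (((d : ℝ) - (k : ℝ)) / (d : ℝ)) *
          (∏ i ∈ Finset.Icc 1 d, B i) ^ ((1 : ℝ) / (d : ℝ)) := by
  have hkd : k < d := by omega
  have hγpos (n : ℕ) : 0 < γ n := one_pos.trans_le (hγ n)
  have hBpos' {m : ℕ} (hm : 1 ≤ m) : ∀ i ∈ Icc m d, 0 < B i :=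
    fun i hi => hBpos i (hm.trans (mem_Icc.mp hi).1) (mem_Icc.mp hi).2
  set x : ℕ → ℝ := fun i => log (B i)
  set G := ∑ n ∈ Ico (d - k) d, log (γ (n + 1)) / 2 / n
  have hΓ : ∏ i ∈ Icc (d - k) (d - 1), γ (i + 1) ^ ((1 : ℝ) / (2 * i)) = exp G := by
    rw [← Ico_add_one_right_eq_Icc, Nat.sub_add_cancel (by omega), exp_sum]
    exact prod_congr rfl fun n _ => by rw [rpow_def_of_pos (hγpos _)]; ring_nf
  have htail := prod_rpow_eq_exp_tailMean (d := d) (n := d - k) (hBpos' (by omega))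
  rw [show d + 1 - (d - k) = k + 1 by omega, Nat.cast_sub hkd.le] at htail
  have hdet := prod_rpow_eq_exp_tailMean (d := d) (n := d) (hBpos' (by omega))
  rw [Nat.add_sub_cancel_left] at hdet
  have hsqrt : √(d : ℝ) ^ log ((d - k) / d) = exp (log d / 2 * (log (d - k) - log d)) := by
    rw [rpow_def_of_pos (sqrt_pos.mpr (by positivity)), log_sqrt d.cast_nonneg,
      log_div (sub_pos.mpr (Nat.cast_lt.mpr hkd)).ne' (by positivity)]
  have hmean : tailMean x d d - G ≤ tailMean x d (d - k) :=
    tailMean_sub_sum_le x _ (by omega) (by omega) fun n hn => by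
      obtain ⟨hkn, hnd⟩ := mem_Ico.mp hn
      have := log_le_half_log_add_tailMean (by omega) (hBpos' (by omega)) (hγpos _)
        (hHKZ (d - n) (by omega) (by omega))
      rwa [show d - (d - n) + 1 = n + 1 by omega] at this
  have hG : G ≤ log d / 2 * (log d - log (d - k)) := by
    simpa only [Nat.cast_sub hkd.le] using
      sum_log_div_le_mul_log_sub_log hγpos hγ' (m := d - k) (d := d) (by omega) (by omega)
  rw [hΓ, htail, hdet, hsqrt, ← exp_neg, ← exp_add, ← exp_add]
  exact ⟨exp_le_exp.mpr (by linarith), exp_le_exp.mpr (by linarith)⟩
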